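/- Let G be a group, π: G → U_k(ℂ) a faithful unitary representation of degree k, and (Γ,Ψ) a G-gain graph with underlying-graph adjacency matrix A⁺ ∈ M_n(ℂ). Then (Γ,Ψ) is balanced if and only if the spectrum (with multiplicities) of the represented adjacency matrix A_π ∈ M_{nk}(ℂ) consists of exactly k copies of the spectrum of A⁺. -/

import Mathlib

open scoped Kronecker
open Matrix Polynomial Filter

namespace GainPaper

variable {G : Type*} [Group G]

/-- The gain of a walk: product of the gains of its darts. -/
def walkGain {n : ℕ} {Γ : SimpleGraph (Fin n)} {M : Type*} [Monoid M]
    (Ψ : Fin n → Fin n → M) {u v : Fin n} (p : Γ.Walk u v) : M :=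
  (p.darts.map fun d => Ψ d.toProd.1 d.toProd.2).prod

/-- `Ψ` is a gain function on `Γ`: the gain of an edge in the reverse
orientation is the inverse of its gain. -/
def IsGain {n : ℕ} (Γ : SimpleGraph (Fin n)) (Ψ : Fin n → Fin n → G) : Prop :=
  ∀ i j, Γ.Adj i j → Ψ j i = (Ψ i j)⁻¹

/-- A gain graph is balanced if every closed walk has gain `1`. -/
def IsBalanced {n : ℕ} (Γ : SimpleGraph (Fin n)) {M : Type*} [Monoid M]
    (Ψ : Fin n → Fin n → M) : Prop :=
  ∀ (v : Fin n) (p : Γ.Walk v v), walkGain Ψ p = 1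

/-- The adjacency matrix of a gain graph, with entries in the group algebra ℂG. -/
noncomputable def gainAdj {n : ℕ} (Γ : SimpleGraph (Fin n)) [DecidableRel Γ.Adj]
    (Ψ : Fin n → Fin n → G) : Matrix (Fin n) (Fin n) (MonoidAlgebra ℂ G) :=
  Matrix.of fun i j => if Γ.Adj i j then MonoidAlgebra.single (Ψ i j) 1 else 0

/-- The involution on ℂG: `(Σ f_x x)* = Σ conj(f_x) x⁻¹`. -/
noncomputable def starCG (f : MonoidAlgebra ℂ G) : MonoidAlgebra ℂ G :=
  f.coeff.sum fun x c => MonoidAlgebra.single x⁻¹ (starRingEnd ℂ c)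

/-- The involution on M_n(ℂG): `(F*)_{i,j} = (F_{j,i})*`. -/
noncomputable def starM {n : ℕ} (F : Matrix (Fin n) (Fin n) (MonoidAlgebra ℂ G)) :
    Matrix (Fin n) (Fin n) (MonoidAlgebra ℂ G) :=
  Matrix.of fun i j => starCG (F j i)

/-- The trace on M_n(ℂG): sum over the diagonal of the coefficients of `1_G`. -/
noncomputable def trCG {n : ℕ} (F : Matrix (Fin n) (Fin n) (MonoidAlgebra ℂ G)) : ℂ :=
  ∑ i, (F i i).coeff 1

/-- The Fourier transform of `f ∈ ℂG` at `π`: `Σ_x f(x) π(x)`. -/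
noncomputable def fourier {m : Type*} (f : MonoidAlgebra ℂ G) (π : G → Matrix m m ℂ) :
    Matrix m m ℂ :=
  f.coeff.sum fun x c => c • π x

/-- The (finite) set of group elements appearing in some entry of `F`. -/
noncomputable def matSupport {n : ℕ} (F : Matrix (Fin n) (Fin n) (MonoidAlgebra ℂ G)) :
    Finset G :=
  letI := Classical.decEq G
  Finset.univ.biUnion fun i : Fin n => Finset.univ.biUnion fun j : Fin n => (F i j).coeff.support

/-- `F(x)`: the complex matrix of coefficients of `x` in the entries of `F`. -/
def matCoeff {n : ℕ} (F : Matrix (Fin n) (Fin n) (MonoidAlgebra ℂ G)) (x : G) :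
    Matrix (Fin n) (Fin n) ℂ :=
  Matrix.of fun i j => (F i j).coeff x

/-- Fourier transform of `F ∈ M_n(ℂG)` at `π`: `F̂(π) = Σ_{x∈G} F(x) ⊗ π(x)`. -/
noncomputable def fourierM {n : ℕ} {m : Type*} (F : Matrix (Fin n) (Fin n) (MonoidAlgebra ℂ G))
    (π : G → Matrix m m ℂ) : Matrix (Fin n × m) (Fin n × m) ℂ :=
  ∑ x ∈ matSupport F, matCoeff F x ⊗ₖ π x

/-- A representation is unitary if each `π g` is a unitary matrix. -/
def IsUnitaryRep {m : Type*} [Fintype m] [DecidableEq m] (π : G →* Matrix m m ℂ) : Prop :=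
  ∀ g, π g ∈ Matrix.unitaryGroup m ℂ

/-- Irreducibility: the space is nonzero and has no nontrivial invariant subspace. -/
def IsIrred {m : Type*} [Fintype m] [DecidableEq m] (π : G →* Matrix m m ℂ) : Prop :=
  Nonempty m ∧
    ∀ W : Submodule ℂ (m → ℂ), (∀ g, ∀ v ∈ W, (π g).mulVec v ∈ W) → W = ⊥ ∨ W = ⊤

/-- Equivalence of two matrix representations: an invertible intertwiner. -/
def RepEquiv {m m' : Type*} [Fintype m] [DecidableEq m] [Fintype m'] [DecidableEq m']
    (π : G →* Matrix m m ℂ) (π' : G →* Matrix m' m' ℂ) : Prop :=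
  ∃ e : (m → ℂ) ≃ₗ[ℂ] (m' → ℂ), ∀ g v, e ((π g).mulVec v) = (π' g).mulVec (e v)

/-- λ₁: the largest real root of the characteristic polynomial
(= the largest eigenvalue, for a Hermitian matrix). -/
noncomputable def lam1 {m : Type*} [Fintype m] [DecidableEq m] (M : Matrix m m ℂ) : ℝ :=
  sSup {x : ℝ | M.charpoly.IsRoot (x : ℂ)}

/-- Spectral radius: the sup of the absolute values of the eigenvalues. -/
noncomputable def specRad {m : Type*} [Fintype m] [DecidableEq m] (M : Matrix m m ℂ) : ℝ :=
  sSup {r : ℝ | ∃ μ : ℂ, M.charpoly.IsRoot μ ∧ r = ‖μ‖}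

/-- Adjacency relation of the cover graph on `V × G`:
`(u,g) ∼ (v,h)` iff `u ∼ v` and `h = Ψ(u,v)⁻¹ g`. -/
def coverAdj {n : ℕ} (Γ : SimpleGraph (Fin n)) (Ψ : Fin n → Fin n → G) (p q : Fin n × G) :
    Prop :=
  Γ.Adj p.1 q.1 ∧ q.2 = (Ψ p.1 q.1)⁻¹ * p.2

/-- The {0,1} adjacency matrix of the cover graph. -/
noncomputable def coverMatrix {n : ℕ} [DecidableEq G] (Γ : SimpleGraph (Fin n))
    [DecidableRel Γ.Adj] (Ψ : Fin n → Fin n → G) : Matrix (Fin n × G) (Fin n × G) ℂ :=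
  Matrix.of fun p q => if Γ.Adj p.1 q.1 ∧ q.2 = (Ψ p.1 q.1)⁻¹ * p.2 then 1 else 0

/-- The left regular representation, as matrices:
`λ_G(g)_{r,p} = 1` if `g = r p⁻¹`, else `0`. -/
noncomputable def lamG [DecidableEq G] : G → Matrix G G ℂ :=
  fun g => Matrix.of fun r p => if g = r * p⁻¹ then 1 else 0

/-!
View `A_π` as the `n × n` matrix of `k × k` blocks `π (Ψ i j)` (via `Matrix.comp`); for the trivial
gain it is `A⁺ ⊗ 1`.

A balanced gain is a coboundary, `Ψ i j = (θ i)⁻¹ * θ j`, so conjugating by the block diagonal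
matrix with blocks `π (θ i)` turns `A_π` into `A⁺ ⊗ 1`, whose characteristic polynomial is
`χ(A⁺) ^ k`.

Conversely, for unitary `π` both `A_π` and `A⁺ ⊗ 1` are Hermitian; equal characteristic
polynomials give equal eigenvalues, hence `tr (A_π ^ h) = tr ((A⁺ ⊗ 1) ^ h)` for every `h`.
Expanding both traces over closed walks of length `h` gives `∑ re tr π(gain) = ∑ k`. For a unitary
`U`, `tr ((U - 1)ᴴ (U - 1)) = 2 (k - re tr U)`, so `re tr U ≤ k` with equality only at `U = 1`.
Hence every closed walk has `π(gain) = 1`, and faithfulness finishes.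
-/

section WalkGain

variable {n : ℕ} {Γ : SimpleGraph (Fin n)}

@[simp]
theorem walkGain_nil {M : Type*} [Monoid M] (Ψ : Fin n → Fin n → M) {u : Fin n} :
    walkGain Ψ (SimpleGraph.Walk.nil : Γ.Walk u u) = 1 := rfl

@[simp]
theorem walkGain_cons {M : Type*} [Monoid M] (Ψ : Fin n → Fin n → M) {u v w : Fin n}
    (h : Γ.Adj u v) (p : Γ.Walk v w) :
    walkGain Ψ (SimpleGraph.Walk.cons h p) = Ψ u v * walkGain Ψ p := by
  simp [walkGain]

theorem walkGain_append {M : Type*} [Monoid M] (Ψ : Fin n → Fin n → M) {u v w : Fin n}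
    (p : Γ.Walk u v) (q : Γ.Walk v w) :
    walkGain Ψ (p.append q) = walkGain Ψ p * walkGain Ψ q := by
  simp [walkGain, SimpleGraph.Walk.darts_append]

theorem walkGain_concat {M : Type*} [Monoid M] (Ψ : Fin n → Fin n → M) {u v w : Fin n}
    (p : Γ.Walk u v) (h : Γ.Adj v w) :
    walkGain Ψ (p.concat h) = walkGain Ψ p * Ψ v w := by
  simp [SimpleGraph.Walk.concat, walkGain_append]

@[simp]
theorem walkGain_copy {M : Type*} [Monoid M] (Ψ : Fin n → Fin n → M) {u v u' v' : Fin n}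
    (p : Γ.Walk u v) (hu : u = u') (hv : v = v') :
    walkGain Ψ (p.copy hu hv) = walkGain Ψ p := by
  subst hu hv
  rfl

theorem map_walkGain {M N : Type*} [Monoid M] [Monoid N] (f : M →* N)
    (Ψ : Fin n → Fin n → M) {u v : Fin n} (p : Γ.Walk u v) :
    f (walkGain Ψ p) = walkGain (fun i j => f (Ψ i j)) p := by
  simp [walkGain, map_list_prod, List.map_map, Function.comp_def]

theorem walkGain_one {M : Type*} [Monoid M] {u v : Fin n} (p : Γ.Walk u v) :
    walkGain (1 : Fin n → Fin n → M) p = 1 := by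
  simp [walkGain]

theorem walkGain_mem {M : Type*} [Monoid M] {S : Submonoid M} {Ψ : Fin n → Fin n → M}
    (hΨ : ∀ i j, Ψ i j ∈ S) {u v : Fin n} (p : Γ.Walk u v) : walkGain Ψ p ∈ S :=
  S.list_prod_mem (by simp [hΨ])

variable {Ψ : Fin n → Fin n → G}

theorem IsGain.walkGain_reverse (hΨ : IsGain Γ Ψ) {u v : Fin n} (p : Γ.Walk u v) :
    walkGain Ψ p.reverse = (walkGain Ψ p)⁻¹ := by
  induction p with
  | nil => simp
  | cons h p ih =>
    rw [SimpleGraph.Walk.reverse_cons, walkGain_append, ih, walkGain_cons, walkGain_cons,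
      walkGain_nil, mul_one, hΨ _ _ h, _root_.mul_inv_rev]

theorem IsBalanced.walkGain_eq (hΨ : IsGain Γ Ψ) (hbal : IsBalanced Γ Ψ) {u v : Fin n}
    (p q : Γ.Walk u v) : walkGain Ψ p = walkGain Ψ q := by
  have := hbal u (p.append q.reverse)
  rwa [walkGain_append, hΨ.walkGain_reverse, mul_inv_eq_one] at this

theorem IsBalanced.exists_potential (hΨ : IsGain Γ Ψ) (hbal : IsBalanced Γ Ψ) :
    ∃ θ : Fin n → G, ∀ i j, Γ.Adj i j → Ψ i j = (θ i)⁻¹ * θ j := by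
  let root : Fin n → Fin n := fun v => (Γ.connectedComponentMk v).out
  have hroot : ∀ v, Γ.Reachable (root v) v := fun v =>
    SimpleGraph.ConnectedComponent.exact (Quot.out_eq _)
  refine ⟨fun v => walkGain Ψ (hroot v).some, fun i j hij => ?_⟩
  have hsame : root j = root i := by
    simp only [root, SimpleGraph.ConnectedComponent.sound hij.reachable]
  rw [eq_inv_mul_iff_mul_eq, ← walkGain_concat _ _ hij,
    hbal.walkGain_eq hΨ _ (((hroot j).some).copy hsame rfl), walkGain_copy]

end WalkGain

section WeightedAdj

variable {n : ℕ} (Γ : SimpleGraph (Fin n)) [DecidableRel Γ.Adj] {S : Type*}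

def weightedAdj [Zero S] (w : Fin n → Fin n → S) : Matrix (Fin n) (Fin n) S :=
  Matrix.of fun i j => if Γ.Adj i j then w i j else 0

theorem weightedAdj_pow_apply [Semiring S] (w : Fin n → Fin n → S) (h : ℕ) (i j : Fin n) :
    (weightedAdj Γ w ^ h) i j = ∑ p ∈ Γ.finsetWalkLength h i j, walkGain w p := by
  induction h generalizing i with
  | zero => obtain rfl | hij := eq_or_ne i j <;> simp [SimpleGraph.finsetWalkLength, one_apply, *]
  | succ h ih =>
    rw [pow_succ', mul_apply, SimpleGraph.finsetWalkLength, Finset.sum_biUnion]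
    · have hcons (x : Γ.neighborSet i) :
          ∑ p ∈ (Γ.finsetWalkLength h x j).map
              ⟨fun p => .cons x.2 p, fun _ _ h => by cases h; rfl⟩, walkGain w p =
            w i x * (weightedAdj Γ w ^ h) x j := by
        rw [Finset.sum_map, ih, Finset.mul_sum]
        exact Finset.sum_congr rfl fun p _ => walkGain_cons w x.2 p
      simp only [hcons, weightedAdj, of_apply, ite_mul, zero_mul]
      rw [← Finset.sum_filter, ← SimpleGraph.neighborFinset_eq_filter]
      exact Finset.sum_subtype _ (by simp) _
    · rintro ⟨x, hx⟩ - ⟨y, hy⟩ - hxy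
      rw [Function.onFun, disjoint_iff_inf_le]
      intro p hp
      simp only [Finset.inf_eq_inter, Finset.mem_inter, Finset.mem_map] at hp
      obtain ⟨⟨px, _, rfl⟩, ⟨py, hpy, hp⟩⟩ := hp
      cases hp
      simp at hxy

end WeightedAdj

theorem fourierM_gainAdj {n : ℕ} (Γ : SimpleGraph (Fin n)) [DecidableRel Γ.Adj] {m : Type*}
    (Ψ : Fin n → Fin n → G) (π : G → Matrix m m ℂ) :
    fourierM (gainAdj Γ Ψ) π = comp _ _ _ _ _ (weightedAdj Γ fun i j => π (Ψ i j)) := by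
  ext ⟨i, a⟩ ⟨j, b⟩
  rw [fourierM, Matrix.sum_apply]
  simp only [kroneckerMap_apply, matCoeff, comp_apply, weightedAdj, of_apply]
  split_ifs with hij
  · have hmem : Ψ i j ∈ matSupport (gainAdj Γ Ψ) := by
      simp only [matSupport, Finset.mem_biUnion]
      exact ⟨i, by simp, j, by simp [gainAdj, hij, MonoidAlgebra.coeff_single]⟩
    rw [Finset.sum_eq_single_of_mem _ hmem fun x _ hx => by
      simp [gainAdj, hij, MonoidAlgebra.coeff_single, Ne.symm hx]]
    simp [gainAdj, hij, MonoidAlgebra.coeff_single]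
  · simp [gainAdj, hij]

section Similarity

variable {ι κ R : Type*} [Fintype ι] [DecidableEq ι] [Fintype κ] [DecidableEq κ] [CommRing R]

theorem charpoly_comp_units_conj (u : (Matrix ι ι (Matrix κ κ R))ˣ)
    (M : Matrix ι ι (Matrix κ κ R)) :
    (comp _ _ _ _ _ (u⁻¹.val * M * u.val)).charpoly = (comp _ _ _ _ _ M).charpoly := by
  simp only [← compRingEquiv_apply]
  rw [map_mul, charpoly_mul_comm, ← map_mul, ← mul_assoc, Units.mul_inv, one_mul]

theorem charmatrix_kronecker_one (A : Matrix ι ι R) :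
    charmatrix (A ⊗ₖ (1 : Matrix κ κ R)) = charmatrix A ⊗ₖ (1 : Matrix κ κ R[X]) := by
  ext ⟨i, a⟩ ⟨j, b⟩
  by_cases hab : a = b <;> by_cases hij : i = j <;>
    simp [one_apply, hab, hij]

theorem charpoly_kronecker_one (A : Matrix ι ι R) :
    (A ⊗ₖ (1 : Matrix κ κ R)).charpoly = A.charpoly ^ Fintype.card κ := by
  rw [charpoly, charmatrix_kronecker_one, det_kronecker, det_one, one_pow, mul_one, charpoly]

end Similarity

section Balanced

variable {n : ℕ} {Γ : SimpleGraph (Fin n)} [DecidableRel Γ.Adj] {Ψ : Fin n → Fin n → G}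
  {κ R : Type*} [Fintype κ] [DecidableEq κ] [CommRing R]

omit [Fintype κ] in
theorem comp_weightedAdj_one :
    comp _ _ _ _ _ (weightedAdj Γ (1 : Fin n → Fin n → Matrix κ κ R)) =
      Γ.adjMatrix R ⊗ₖ (1 : Matrix κ κ R) := by
  ext ⟨i, a⟩ ⟨j, b⟩
  by_cases hij : Γ.Adj i j <;> simp [weightedAdj, hij]

theorem exists_units_conj_of_potential (π : G →* Matrix κ κ R) {θ : Fin n → G}
    (hθ : ∀ i j, Γ.Adj i j → Ψ i j = (θ i)⁻¹ * θ j) :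
    ∃ u : (Matrix (Fin n) (Fin n) (Matrix κ κ R))ˣ,
      weightedAdj Γ (fun i j => π (Ψ i j)) = u⁻¹.val * weightedAdj Γ 1 * u.val := by
  refine ⟨⟨diagonal fun i => π (θ i), diagonal fun i => π (θ i)⁻¹, ?_, ?_⟩, ?_⟩
  · simp [← map_mul]
  · simp [← map_mul]
  · ext i j : 2
    by_cases hij : Γ.Adj i j <;> simp [weightedAdj, hij, hθ, ← map_mul]

theorem IsBalanced.charpoly_comp_weightedAdj (hΨ : IsGain Γ Ψ) (hbal : IsBalanced Γ Ψ)
    (π : G →* Matrix κ κ R) :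
    (comp _ _ _ _ _ (weightedAdj Γ fun i j => π (Ψ i j))).charpoly =
      (Γ.adjMatrix R).charpoly ^ Fintype.card κ := by
  obtain ⟨θ, hθ⟩ := hbal.exists_potential hΨ
  obtain ⟨u, hu⟩ := exists_units_conj_of_potential π hθ
  rw [hu, charpoly_comp_units_conj, comp_weightedAdj_one, charpoly_kronecker_one]

end Balanced

section Unitary

open scoped ComplexOrder

variable {κ 𝕜 : Type*} [Fintype κ] [DecidableEq κ] [RCLike 𝕜] {U : Matrix κ κ 𝕜}

theorem trace_conjTranspose_sub_one_mul_sub_one (hU : U ∈ unitaryGroup κ 𝕜) :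
    ((U - 1)ᴴ * (U - 1)).trace = ((2 * (Fintype.card κ - RCLike.re U.trace) : ℝ) : 𝕜) := by
  have hUU : Uᴴ * U = 1 := (mem_unitaryGroup_iff').mp hU
  rw [conjTranspose_sub, conjTranspose_one, sub_mul, mul_sub, mul_sub, hUU, mul_one, one_mul,
    mul_one, trace_sub, trace_sub, trace_sub, trace_conjTranspose, trace_one]
  push_cast
  rw [mul_sub, ← RCLike.add_conj, RCLike.star_def]
  ring

theorem re_trace_le_card_of_mem_unitaryGroup (hU : U ∈ unitaryGroup κ 𝕜) :
    RCLike.re U.trace ≤ Fintype.card κ := by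
  have := (posSemidef_conjTranspose_mul_self (U - 1)).trace_nonneg
  rw [trace_conjTranspose_sub_one_mul_sub_one hU, RCLike.ofReal_nonneg] at this
  linarith

theorem eq_one_of_re_trace_eq_card (hU : U ∈ unitaryGroup κ 𝕜)
    (h : RCLike.re U.trace = Fintype.card κ) : U = 1 := by
  have : ((U - 1)ᴴ * (U - 1)).trace = 0 := by
    rw [trace_conjTranspose_sub_one_mul_sub_one hU, h, sub_self, mul_zero, RCLike.ofReal_zero]
  exact sub_eq_zero.mp (trace_conjTranspose_mul_self_eq_zero_iff.mp this)

end Unitary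

theorem IsUnitaryRep.map_inv {κ : Type*} [Fintype κ] [DecidableEq κ]
    {π : G →* Matrix κ κ ℂ} (hU : IsUnitaryRep π) (g : G) : π g⁻¹ = (π g)ᴴ :=
  left_inv_eq_right_inv (by rw [← map_mul, inv_mul_cancel, map_one])
    ((mem_unitaryGroup_iff).mp (hU g))

section Hermitian

variable {ι 𝕜 : Type*} [Fintype ι] [DecidableEq ι] [RCLike 𝕜] {A B : Matrix ι ι 𝕜}

theorem _root_.Matrix.IsHermitian.trace_pow (hA : A.IsHermitian) (h : ℕ) :
    (A ^ h).trace = ∑ i, (hA.eigenvalues i : 𝕜) ^ h := by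
  conv_lhs => rw [hA.spectral_theorem]
  rw [← map_pow, Unitary.conjStarAlgAut_apply, trace_mul_cycle, Unitary.coe_star_mul_self,
    one_mul, diagonal_pow, trace_diagonal]
  rfl

theorem _root_.Matrix.IsHermitian.trace_pow_eq_of_charpoly_eq (hA : A.IsHermitian)
    (hB : B.IsHermitian) (hAB : A.charpoly = B.charpoly) (h : ℕ) :
    (A ^ h).trace = (B ^ h).trace := by
  rw [hA.trace_pow, hB.trace_pow, (hA.eigenvalues_eq_eigenvalues_iff hB).mpr hAB]

end Hermitian

section Spectrum

variable {n : ℕ} {Γ : SimpleGraph (Fin n)} [DecidableRel Γ.Adj] {κ : Type*}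

theorem isHermitian_comp_weightedAdj {α : Type*} [AddMonoid α] [StarAddMonoid α]
    {w : Fin n → Fin n → Matrix κ κ α} (hw : ∀ i j, Γ.Adj i j → w j i = (w i j)ᴴ) :
    (comp _ _ _ _ _ (weightedAdj Γ w)).IsHermitian := by
  ext ⟨i, a⟩ ⟨j, b⟩
  by_cases hij : Γ.Adj i j
  · simp [weightedAdj, hij, hij.symm, hw i j hij]
  · have hji : ¬Γ.Adj j i := fun h => hij h.symm
    simp [weightedAdj, hij, hji]

variable [Fintype κ]

theorem trace_comp {ι α : Type*} [Fintype ι] [AddCommMonoid α]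
    (M : Matrix ι ι (Matrix κ κ α)) :
    (comp _ _ _ _ _ M).trace = ∑ i, (M i i).trace :=
  Fintype.sum_prod_type _

variable [DecidableEq κ]

theorem trace_comp_weightedAdj_pow {α : Type*} [Semiring α] (w : Fin n → Fin n → Matrix κ κ α)
    (h : ℕ) : (comp _ _ _ _ _ (weightedAdj Γ w) ^ h).trace =
      ∑ i, ∑ p ∈ Γ.finsetWalkLength h i i, (walkGain w p).trace := by
  rw [← compRingEquiv_apply, ← map_pow, compRingEquiv_apply, trace_comp]
  simp only [weightedAdj_pow_apply, trace_sum]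

theorem walkGain_eq_one_of_trace_pow_eq {𝕜 : Type*} [RCLike 𝕜]
    {w : Fin n → Fin n → Matrix κ κ 𝕜} (hw : ∀ i j, w i j ∈ unitaryGroup κ 𝕜)
    (htr : ∀ h, (comp _ _ _ _ _ (weightedAdj Γ w) ^ h).trace =
      (comp _ _ _ _ _ (weightedAdj Γ (1 : Fin n → Fin n → Matrix κ κ 𝕜)) ^ h).trace)
    {v : Fin n} (p : Γ.Walk v v) : walkGain w p = 1 := by
  have hle (i : Fin n) (q : Γ.Walk i i) : RCLike.re (walkGain w q).trace ≤ Fintype.card κ :=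
    re_trace_le_card_of_mem_unitaryGroup (walkGain_mem hw q)
  have hsum := congrArg RCLike.re (htr p.length)
  simp only [trace_comp_weightedAdj_pow, walkGain_one, trace_one, map_sum, RCLike.natCast_re]
    at hsum
  rw [Finset.sum_eq_sum_iff_of_le fun i _ => Finset.sum_le_sum fun q _ => hle i q] at hsum
  refine eq_one_of_re_trace_eq_card (walkGain_mem hw p) ?_
  exact (Finset.sum_eq_sum_iff_of_le fun q _ => hle v q).mp (hsum v (Finset.mem_univ v)) p
    (SimpleGraph.mem_finsetWalkLength_iff.mpr rfl)

end Spectrum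

/-- for a faithful unitary representation of degree k, balance is
equivalent to the spectrum of `A_π` being k copies of the spectrum of `A⁺`. -/
theorem statement11 {G : Type*} [Group G] {n k : ℕ} (Γ : SimpleGraph (Fin n))
    [DecidableRel Γ.Adj] (Ψ : Fin n → Fin n → G) (hΨ : IsGain Γ Ψ)
    (π : G →* Matrix (Fin k) (Fin k) ℂ) (hU : IsUnitaryRep π)
    (hfaith : Function.Injective ⇑π) :
    IsBalanced Γ Ψ ↔
      (fourierM (gainAdj Γ Ψ) ⇑π).charpoly = (Γ.adjMatrix ℂ).charpoly ^ k := by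
  rw [fourierM_gainAdj]
  refine ⟨fun hbal => by simpa using hbal.charpoly_comp_weightedAdj hΨ π, fun hcp v p => ?_⟩
  have hherm := isHermitian_comp_weightedAdj (w := fun i j => π (Ψ i j)) fun i j hij => by
    rw [hΨ i j hij, hU.map_inv]
  have hherm₁ := isHermitian_comp_weightedAdj (Γ := Γ)
    (w := (1 : Fin n → Fin n → Matrix (Fin k) (Fin k) ℂ)) fun _ _ _ => by simp
  have htr := hherm.trace_pow_eq_of_charpoly_eq hherm₁ (by
    rw [hcp, comp_weightedAdj_one, charpoly_kronecker_one, Fintype.card_fin])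
  have hgain := walkGain_eq_one_of_trace_pow_eq (fun i j => hU (Ψ i j)) htr p
  rw [← map_walkGain] at hgain
  exact hfaith (hgain.trans (map_one π).symm)

end GainPaper
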